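/- If w ∈ A₁^ρ, then w^{−r} ∈ RH_∞^ρ for every r > 0. -/

import Mathlib

open MeasureTheory

noncomputable section

/-- The axis-parallel cube centered at `x` with "radius" `r = √d · ℓ(Q)/2`,
i.e. side length `2r/√d`. -/
def cube (d : ℕ) (x : EuclideanSpace ℝ (Fin d)) (r : ℝ) :
    Set (EuclideanSpace ℝ (Fin d)) :=
  {y | ∀ i, |y i - x i| ≤ r / Real.sqrt d}

/-- Average `(1/|Q|) ∫_Q w` over the cube `Q(x,r)`. -/
def cubeAvg {d : ℕ} (x : EuclideanSpace ℝ (Fin d)) (r : ℝ)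
    (w : EuclideanSpace ℝ (Fin d) → ℝ) : ℝ :=
  (volume (cube d x r)).toReal⁻¹ * ∫ y in cube d x r, w y

/-- Weighted average `(1/u(Q)) ∫_Q v·u` over the cube `Q(x,r)`. -/
def cubeAvgW {d : ℕ} (x : EuclideanSpace ℝ (Fin d)) (r : ℝ)
    (u v : EuclideanSpace ℝ (Fin d) → ℝ) : ℝ :=
  (∫ y in cube d x r, u y)⁻¹ * ∫ y in cube d x r, v y * u y

/-- Essential infimum of `w` over the cube `Q(x,r)`. -/
def cubeInf {d : ℕ} (x : EuclideanSpace ℝ (Fin d)) (r : ℝ)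
    (w : EuclideanSpace ℝ (Fin d) → ℝ) : ℝ :=
  essInf w (volume.restrict (cube d x r))

/-- Essential supremum of `w` over the cube `Q(x,r)`. -/
def cubeSup {d : ℕ} (x : EuclideanSpace ℝ (Fin d)) (r : ℝ)
    (w : EuclideanSpace ℝ (Fin d) → ℝ) : ℝ :=
  essSup w (volume.restrict (cube d x r))

/-- `ρ` is a critical radius function with constants `C₀ > 0` and `N₀ ≥ 1`:
`C₀⁻¹ ρ(x)(1+|x−y|/ρ(x))^{−N₀} ≤ ρ(y) ≤ C₀ ρ(x)(1+|x−y|/ρ(x))^{N₀/(N₀+1)}`. -/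
def IsCRF {d : ℕ} (ρ : EuclideanSpace ℝ (Fin d) → ℝ) (C₀ N₀ : ℝ) : Prop :=
  (∀ x, 0 < ρ x) ∧
    ∀ x y, C₀⁻¹ * ρ x * (1 + dist x y / ρ x) ^ (-N₀) ≤ ρ y ∧
      ρ y ≤ C₀ * ρ x * (1 + dist x y / ρ x) ^ (N₀ / (N₀ + 1))

/-- A weight: a locally integrable function which is positive a.e. -/
def IsWeight {d : ℕ} (w : EuclideanSpace ℝ (Fin d) → ℝ) : Prop :=
  LocallyIntegrable w volume ∧ ∀ᵐ x ∂(volume : Measure (EuclideanSpace ℝ (Fin d))), 0 < w x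

/-- The class `A₁^{ρ,θ}` with explicit constant `C`. -/
def A1C {d : ℕ} (ρ : EuclideanSpace ℝ (Fin d) → ℝ) (θ C : ℝ)
    (w : EuclideanSpace ℝ (Fin d) → ℝ) : Prop :=
  ∀ x r, 0 < r → cubeAvg x r w ≤ C * (1 + r / ρ x) ^ θ * cubeInf x r w

/-- The class `A₁^{ρ,θ}`. -/
def memA1 {d : ℕ} (ρ : EuclideanSpace ℝ (Fin d) → ℝ) (θ : ℝ)
    (w : EuclideanSpace ℝ (Fin d) → ℝ) : Prop :=
  ∃ C > 0, A1C ρ θ C w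

/-- The class `A₁^ρ = ∪_{θ ≥ 0} A₁^{ρ,θ}`. -/
def A1 {d : ℕ} (ρ : EuclideanSpace ℝ (Fin d) → ℝ)
    (w : EuclideanSpace ℝ (Fin d) → ℝ) : Prop :=
  ∃ θ ≥ 0, memA1 ρ θ w

/-- The class `A_p^{ρ,θ}` (for `1 < p < ∞`) with explicit constant `C`;
here `p' = p/(p-1)`. -/
def ApC {d : ℕ} (ρ : EuclideanSpace ℝ (Fin d) → ℝ) (p θ C : ℝ)
    (w : EuclideanSpace ℝ (Fin d) → ℝ) : Prop :=
  ∀ x r, 0 < r →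
    (cubeAvg x r w) ^ (1 / p) *
      (cubeAvg x r fun y => w y ^ (1 - p / (p - 1))) ^ (1 - 1 / p) ≤
        C * (1 + r / ρ x) ^ θ

/-- The class `A_p^{ρ,θ}` for `1 < p < ∞`. -/
def memAp {d : ℕ} (ρ : EuclideanSpace ℝ (Fin d) → ℝ) (p θ : ℝ)
    (w : EuclideanSpace ℝ (Fin d) → ℝ) : Prop :=
  ∃ C > 0, ApC ρ p θ C w

/-- The class `A_p^ρ = ∪_{θ ≥ 0} A_p^{ρ,θ}` for `1 < p < ∞`. -/
def Ap {d : ℕ} (ρ : EuclideanSpace ℝ (Fin d) → ℝ) (p : ℝ)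
    (w : EuclideanSpace ℝ (Fin d) → ℝ) : Prop :=
  ∃ θ ≥ 0, memAp ρ p θ w

/-- The class `A_∞^ρ = ∪_{p > 1} A_p^ρ`. -/
def Ainf {d : ℕ} (ρ : EuclideanSpace ℝ (Fin d) → ℝ)
    (w : EuclideanSpace ℝ (Fin d) → ℝ) : Prop :=
  ∃ p, 1 < p ∧ Ap ρ p w

/-- The reverse Hölder class `RH_s^{ρ,θ}` with explicit constant `C`. -/
def RHC {d : ℕ} (ρ : EuclideanSpace ℝ (Fin d) → ℝ) (s θ C : ℝ)
    (w : EuclideanSpace ℝ (Fin d) → ℝ) : Prop :=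
  ∀ x r, 0 < r →
    (cubeAvg x r fun y => w y ^ s) ^ (1 / s) ≤
      C * (1 + r / ρ x) ^ θ * cubeAvg x r w

/-- The reverse Hölder class `RH_s^{ρ,θ}`. -/
def memRH {d : ℕ} (ρ : EuclideanSpace ℝ (Fin d) → ℝ) (s θ : ℝ)
    (w : EuclideanSpace ℝ (Fin d) → ℝ) : Prop :=
  ∃ C > 0, RHC ρ s θ C w

/-- The class `RH_s^ρ = ∪_{θ ≥ 0} RH_s^{ρ,θ}`. -/
def RH {d : ℕ} (ρ : EuclideanSpace ℝ (Fin d) → ℝ) (s : ℝ)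
    (w : EuclideanSpace ℝ (Fin d) → ℝ) : Prop :=
  ∃ θ ≥ 0, memRH ρ s θ w

/-- The class `RH_∞^{ρ,θ}` with explicit constant `C`. -/
def RHinfC {d : ℕ} (ρ : EuclideanSpace ℝ (Fin d) → ℝ) (θ C : ℝ)
    (w : EuclideanSpace ℝ (Fin d) → ℝ) : Prop :=
  ∀ x r, 0 < r → cubeSup x r w ≤ C * (1 + r / ρ x) ^ θ * cubeAvg x r w

/-- The class `RH_∞^{ρ,θ}`. -/
def memRHinf {d : ℕ} (ρ : EuclideanSpace ℝ (Fin d) → ℝ) (θ : ℝ)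
    (w : EuclideanSpace ℝ (Fin d) → ℝ) : Prop :=
  ∃ C > 0, RHinfC ρ θ C w

/-- The class `RH_∞^ρ = ∪_{θ ≥ 0} RH_∞^{ρ,θ}`. -/
def RHinf {d : ℕ} (ρ : EuclideanSpace ℝ (Fin d) → ℝ)
    (w : EuclideanSpace ℝ (Fin d) → ℝ) : Prop :=
  ∃ θ ≥ 0, memRHinf ρ θ w

/-- The weighted class `A_p^{ρ,θ}(u)` (for `1 < p < ∞`) with explicit constant `C`. -/
def ApWC {d : ℕ} (ρ u : EuclideanSpace ℝ (Fin d) → ℝ) (p θ C : ℝ)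
    (v : EuclideanSpace ℝ (Fin d) → ℝ) : Prop :=
  ∀ x r, 0 < r →
    (cubeAvgW x r u v) ^ (1 / p) *
      (cubeAvgW x r u fun y => v y ^ (1 - p / (p - 1))) ^ (1 - 1 / p) ≤
        C * (1 + r / ρ x) ^ θ

/-- The weighted class `A_p^{ρ,θ}(u)` for `1 < p < ∞`. -/
def memApW {d : ℕ} (ρ u : EuclideanSpace ℝ (Fin d) → ℝ) (p θ : ℝ)
    (v : EuclideanSpace ℝ (Fin d) → ℝ) : Prop :=
  ∃ C > 0, ApWC ρ u p θ C v

/-- The weighted class `A_p^ρ(u) = ∪_{θ ≥ 0} A_p^{ρ,θ}(u)` for `1 < p < ∞`. -/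
def ApW {d : ℕ} (ρ u : EuclideanSpace ℝ (Fin d) → ℝ) (p : ℝ)
    (v : EuclideanSpace ℝ (Fin d) → ℝ) : Prop :=
  ∃ θ ≥ 0, memApW ρ u p θ v

/-- The weighted class `A₁^{ρ,θ}(u)`. -/
def memA1W {d : ℕ} (ρ u : EuclideanSpace ℝ (Fin d) → ℝ) (θ : ℝ)
    (v : EuclideanSpace ℝ (Fin d) → ℝ) : Prop :=
  ∃ C > 0, ∀ x r, 0 < r → cubeAvgW x r u v ≤ C * (1 + r / ρ x) ^ θ * cubeInf x r v

/-- The weighted class `A₁^ρ(u)`. -/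
def A1W {d : ℕ} (ρ u : EuclideanSpace ℝ (Fin d) → ℝ)
    (v : EuclideanSpace ℝ (Fin d) → ℝ) : Prop :=
  ∃ θ ≥ 0, memA1W ρ u θ v

/-- The weighted class `A_∞^ρ(u) = ∪_{p > 1} A_p^ρ(u)`. -/
def AinfW {d : ℕ} (ρ u : EuclideanSpace ℝ (Fin d) → ℝ)
    (v : EuclideanSpace ℝ (Fin d) → ℝ) : Prop :=
  ∃ p, 1 < p ∧ ApW ρ u p v

/-!
On a cube `Q = Q(x, r)` the `A₁^ρ` condition reads `⨍_Q w ≤ K · ess inf_Q w` with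
`K = C (1 + r/ρ(x))^θ`. Since `t ↦ t^{-s}` is decreasing,
`ess sup_Q w^{-s} = (ess inf_Q w)^{-s} ≤ K^s (⨍_Q w)^{-s}`, and since it is convex, Jensen's
inequality gives `(⨍_Q w)^{-s} ≤ ⨍_Q w^{-s}`. Hence `w^{-s} ∈ RH_∞^{ρ, sθ}` with constant `C^s`.
-/

open Filter Set

theorem Real.convexOn_rpow_neg {s : ℝ} (hs : 0 ≤ s) : ConvexOn ℝ (Ioi 0) fun t : ℝ => t ^ (-s) := by
  have hlog : ConvexOn ℝ (Ioi 0) fun t => -s * Real.log t :=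
    (strictConcaveOn_log_Ioi.concaveOn.neg.smul hs).congr fun t _ => by simp
  have himage : Convex ℝ ((fun t => -s * Real.log t) '' Ioi 0) :=
    Real.convex_iff_isPreconnected.2 <| isPreconnected_Ioi.image _ fun t ht =>
      ((Real.continuousAt_log (ne_of_gt ht)).const_mul _).continuousWithinAt
  refine ((convexOn_exp.subset (subset_univ _) himage).comp hlog
    (Real.exp_monotone.monotoneOn _)).congr fun t ht => ?_
  simp [Real.rpow_def_of_pos ht, mul_comm]

section NegativePower

variable {α : Type*} [MeasurableSpace α] {μ : Measure α} [NeZero μ] {w : α → ℝ} {m s : ℝ}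

theorem essSup_rpow_neg_le (hm : 0 < m) (hmw : ∀ᵐ y ∂μ, m ≤ w y) (hs : 0 ≤ s) :
    essSup (fun y => w y ^ (-s)) μ ≤ m ^ (-s) := by
  refine essSup_le_of_ae_le _ (hmw.mono fun y hy => ?_) ?_
  · exact Real.rpow_le_rpow_of_nonpos hm hy (neg_nonpos.2 hs)
  · exact isCoboundedUnder_le_of_eventually_le _
      (hmw.mono fun y hy => Real.rpow_nonneg (hm.le.trans hy) _)

variable [IsFiniteMeasure μ]

theorem rpow_neg_average_le_average_rpow_neg (hw : Integrable w μ)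
    (hm : 0 < m) (hmw : ∀ᵐ y ∂μ, m ≤ w y) (hs : 0 ≤ s) :
    (⨍ y, w y ∂μ) ^ (-s) ≤ ⨍ y, w y ^ (-s) ∂μ := by
  have hpow_int : Integrable (fun y => w y ^ (-s)) μ := by
    refine (integrable_const (m ^ (-s))).mono' ?_ (hmw.mono fun y hy => ?_)
    · exact (hw.aemeasurable.pow_const _).aestronglyMeasurable
    · rw [Real.norm_of_nonneg (Real.rpow_nonneg (hm.le.trans hy) _)]
      exact Real.rpow_le_rpow_of_nonpos hm hy (neg_nonpos.2 hs)
  refine ((Real.convexOn_rpow_neg hs).subset (Ici_subset_Ioi.2 hm) (convex_Ici m)).map_average_le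
    (fun t ht => (Real.continuousAt_rpow_const _ _ (Or.inl (hm.trans_le ht).ne')).continuousWithinAt)
    isClosed_Ici hmw hw hpow_int

theorem average_pos_of_ae_pos (hw : Integrable w μ) (hpos : ∀ᵐ y ∂μ, 0 < w y) :
    0 < ⨍ y, w y ∂μ := by
  rw [average_eq, smul_eq_mul]
  refine mul_pos (inv_pos.2 measureReal_univ_pos) ?_
  rw [integral_pos_iff_support_of_nonneg_ae (hpos.mono fun y hy => hy.le) hw, pos_iff_ne_zero]
  intro hzero
  obtain ⟨y, hy, hy0⟩ := (hpos.and (measure_eq_zero_iff_ae_notMem.1 hzero)).exists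
  exact hy0 hy.ne'

theorem essSup_rpow_neg_le_mul_average (hw : Integrable w μ) (hpos : ∀ᵐ y ∂μ, 0 < w y)
    {K : ℝ} (hK : 0 < K) (hA1 : ⨍ y, w y ∂μ ≤ K * essInf w μ) (hs : 0 ≤ s) :
    essSup (fun y => w y ^ (-s)) μ ≤ K ^ s * ⨍ y, w y ^ (-s) ∂μ := by
  have havg : 0 < ⨍ y, w y ∂μ := average_pos_of_ae_pos hw hpos
  have hinf : (⨍ y, w y ∂μ) / K ≤ essInf w μ := by rwa [div_le_iff₀' hK]
  have hinf_pos : 0 < essInf w μ := (div_pos havg hK).trans_le hinf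
  have hinf_le : ∀ᵐ y ∂μ, essInf w μ ≤ w y :=
    ae_essInf_le ⟨0, eventually_map.2 (hpos.mono fun y hy => hy.le)⟩
  calc essSup (fun y => w y ^ (-s)) μ
      ≤ essInf w μ ^ (-s) := essSup_rpow_neg_le hinf_pos hinf_le hs
    _ ≤ ((⨍ y, w y ∂μ) / K) ^ (-s) :=
        Real.rpow_le_rpow_of_nonpos (div_pos havg hK) hinf (neg_nonpos.2 hs)
    _ = K ^ s * (⨍ y, w y ∂μ) ^ (-s) := by
        rw [Real.div_rpow havg.le hK.le, Real.rpow_neg hK.le, div_inv_eq_mul, mul_comm]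
    _ ≤ K ^ s * ⨍ y, w y ^ (-s) ∂μ := by
        gcongr
        exact rpow_neg_average_le_average_rpow_neg hw hinf_pos hinf_le hs

end NegativePower

section Cube

variable {d : ℕ}

theorem cube_eq_preimage_ofLp (x : EuclideanSpace ℝ (Fin d)) (r : ℝ) :
    cube d x r = WithLp.ofLp ⁻¹' univ.pi fun i => Icc (x i - r / √d) (x i + r / √d) := by
  ext y
  simp only [cube, mem_ofPred_eq, mem_preimage, mem_univ_pi, mem_Icc, abs_sub_le_iff]
  refine forall_congr' fun i => ?_
  constructor <;> rintro ⟨h₁, h₂⟩ <;> constructor <;> linarith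

theorem isCompact_cube (x : EuclideanSpace ℝ (Fin d)) (r : ℝ) : IsCompact (cube d x r) := by
  rw [cube_eq_preimage_ofLp]
  exact (PiLp.homeomorph 2 _).isCompact_preimage.2 (isCompact_univ_pi fun _ => isCompact_Icc)

theorem volume_cube (x : EuclideanSpace ℝ (Fin d)) (r : ℝ) :
    volume (cube d x r) = ENNReal.ofReal (2 * (r / √d)) ^ d := by
  rw [cube_eq_preimage_ofLp, (PiLp.volume_preserving_ofLp _).measure_preimage
    (MeasurableSet.univ_pi fun _ => measurableSet_Icc).nullMeasurableSet, volume_pi_pi]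
  simp [Real.volume_Icc, two_mul]

theorem volume_cube_ne_zero (x : EuclideanSpace ℝ (Fin d)) {r : ℝ} (hr : 0 < r) :
    volume (cube d x r) ≠ 0 := by
  rw [volume_cube]
  rcases d.eq_zero_or_pos with rfl | hd
  · simp
  · exact pow_ne_zero _ (ENNReal.ofReal_pos.2 (by positivity)).ne'

theorem cubeAvg_eq_setAverage (x : EuclideanSpace ℝ (Fin d)) (r : ℝ)
    (w : EuclideanSpace ℝ (Fin d) → ℝ) : cubeAvg x r w = ⨍ y in cube d x r, w y := by
  rw [cubeAvg, setAverage_eq, smul_eq_mul, measureReal_def]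

end Cube

theorem RHinfC_rpow_neg_of_A1C {d : ℕ} {ρ w : EuclideanSpace ℝ (Fin d) → ℝ} (hρ : ∀ x, 0 < ρ x)
    (hw : IsWeight w) {θ C s : ℝ} (hC : 0 < C) (hA1 : A1C ρ θ C w) (hs : 0 ≤ s) :
    RHinfC ρ (s * θ) (C ^ s) fun y => w y ^ (-s) := by
  intro x t ht
  have hbase : 0 < 1 + t / ρ x := by have := hρ x; positivity
  have : IsFiniteMeasure (volume.restrict (cube d x t)) :=
    isFiniteMeasure_restrict.2 (isCompact_cube x t).measure_lt_top.ne
  have : NeZero (volume.restrict (cube d x t)) :=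
    ⟨mt Measure.restrict_eq_zero.1 (volume_cube_ne_zero x ht)⟩
  have hRH := essSup_rpow_neg_le_mul_average (hw.1.integrableOn_isCompact (isCompact_cube x t))
    (ae_restrict_of_ae hw.2) (mul_pos hC (Real.rpow_pos_of_pos hbase θ))
    (by rw [← cubeAvg_eq_setAverage]; exact hA1 x t ht) hs
  rwa [Real.mul_rpow hC.le (Real.rpow_nonneg hbase.le θ), ← Real.rpow_mul hbase.le, mul_comm θ,
    ← cubeAvg_eq_setAverage] at hRH

theorem A1_neg_power_in_RHinf_general {d : ℕ} (ρ : EuclideanSpace ℝ (Fin d) → ℝ)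
    (C₀ N₀ : ℝ) (hρ : IsCRF ρ C₀ N₀)
    (w : EuclideanSpace ℝ (Fin d) → ℝ) (hw : IsWeight w) (h : A1 ρ w) :
    ∀ r : ℝ, 0 < r → RHinf ρ (fun x => w x ^ (-r)) := by
  obtain ⟨θ, hθ, C, hC, hA1⟩ := h
  intro r hr
  exact ⟨r * θ, mul_nonneg hr.le hθ, C ^ r, Real.rpow_pos_of_pos hC r,
    RHinfC_rpow_neg_of_A1C hρ.1 hw hC hA1 hr.le⟩

/-- If `w ∈ A₁^ρ` then `w^{−r} ∈ RH_∞^ρ` for every `r > 0`. -/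
theorem A1_neg_power_in_RHinf {d : ℕ} (ρ : EuclideanSpace ℝ (Fin d) → ℝ)
    (C₀ N₀ : ℝ) (hC₀ : 0 < C₀) (hN₀ : 1 ≤ N₀) (hρ : IsCRF ρ C₀ N₀)
    (w : EuclideanSpace ℝ (Fin d) → ℝ) (hw : IsWeight w) (h : A1 ρ w) :
    ∀ r : ℝ, 0 < r → RHinf ρ (fun x => w x ^ (-r)) :=
  A1_neg_power_in_RHinf_general ρ C₀ N₀ hρ w hw h

end
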